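/- The Armijo line search in the gradient method terminates: if J : ℝᵖ → ℝ is continuously differentiable at q with ∇J(q) ≠ 0, γ ∈ (0, 1/2), β ∈ (0,1), then there exists l ∈ ℕ such that J(q - βˡ∇J(q)) ≤ J(q) - γβˡ‖∇J(q)‖². -/

import Mathlib

/-!
Along the direction `-∇J(q)` the line derivative of `J` at `q` is `-‖∇J(q)‖²`, which is strictly
below the Armijo slope `-γ‖∇J(q)‖²` because `γ < 1` and `∇J(q) ≠ 0`. Hence the sufficient-decrease
inequality holds for all small enough step sizes `t > 0`, in particular for `t = βˡ` with `l` large.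
-/

open Filter Topology InnerProductSpace

theorem HasLineDerivAt.eventually_le_add_mul {E : Type*} [AddCommGroup E] [Module ℝ E]
    {f : E → ℝ} {f' c : ℝ} {x v : E} (hf : HasLineDerivAt ℝ f f' x v) (hc : f' < c) :
    ∀ᶠ t in 𝓝[>] (0 : ℝ), f (x + t • v) ≤ f x + c * t := by
  filter_upwards [hf.tendsto_slope_zero_right.eventually (gt_mem_nhds hc),
    self_mem_nhdsWithin] with t hslope (ht : 0 < t)
  rw [smul_eq_mul, inv_mul_lt_iff₀ ht] at hslope
  linarith

section Gradient

variable {E : Type*} [NormedAddCommGroup E] [InnerProductSpace ℝ E] [CompleteSpace E]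
  {J : E → ℝ} {g q : E}

theorem HasGradientAt.hasLineDerivAt_neg (hJ : HasGradientAt J g q) :
    HasLineDerivAt ℝ J (-‖g‖ ^ 2) q (-g) := by
  have h := hJ.hasFDerivAt.hasLineDerivAt (-g)
  rwa [toDual_apply_apply, inner_neg_right, real_inner_self_eq_norm_sq] at h

theorem HasGradientAt.eventually_armijo (hJ : HasGradientAt J g q) (hg : g ≠ 0) {γ : ℝ}
    (hγ : γ < 1) :
    ∀ᶠ t in 𝓝[>] (0 : ℝ), J (q - t • g) ≤ J q - γ * t * ‖g‖ ^ 2 := by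
  have hslope : -‖g‖ ^ 2 < -γ * ‖g‖ ^ 2 := by
    linarith [mul_lt_of_lt_one_left (by positivity : 0 < ‖g‖ ^ 2) hγ]
  filter_upwards [hJ.hasLineDerivAt_neg.eventually_le_add_mul hslope] with t ht
  rw [smul_neg, ← sub_eq_add_neg] at ht
  linarith

end Gradient

/-- Termination of the Armijo line search: if `J` is differentiable at `q` with
`∇J(q) ≠ 0`, `γ ∈ (0,1/2)`, `β ∈ (0,1)`, then there exists `l ∈ ℕ` with
`J(q - βˡ∇J(q)) ≤ J(q) - γβˡ‖∇J(q)‖²`. -/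
theorem armijo_terminates {p : ℕ}
    (J : EuclideanSpace ℝ (Fin p) → ℝ) (q : EuclideanSpace ℝ (Fin p))
    (hJ : DifferentiableAt ℝ J q) (hg : gradient J q ≠ 0)
    (γ β : ℝ) (hγ : γ ∈ Set.Ioo (0 : ℝ) (1/2)) (hβ : β ∈ Set.Ioo (0 : ℝ) 1) :
    ∃ l : ℕ, J (q - β ^ l • gradient J q)
      ≤ J q - γ * β ^ l * ‖gradient J q‖ ^ 2 :=
  ((tendsto_pow_atTop_nhdsWithin_zero_of_lt_one hβ.1 hβ.2).eventually
    (hJ.hasGradientAt.eventually_armijo hg (by linarith [hγ.2]))).exists
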